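/- arXiv:2303.14422 — 3 statements merged into one kernel-verified Lean document; each statement's English description precedes it below -/
import Mathlib

section
/- The composite mM-MCMC transition satisfies detailed balance with respect to the extended distribution: for all z, z' ∈ ℝ^m and x, x' ∈ ℝ^d at which all the quantities below are finite and strictly positive, μ_ext(z,x) · q₀(z,z') · α_CG(z,z') · ν_λ(x'|z') · α_f(z,z') = μ_ext(z',x') · q₀(z',z) · α_CG(z',z) · ν_λ(x|z) · α_f(z',z), where α_CG(z,z') = min{1, (μ̄₀(z') q₀(z',z)) / (μ̄₀(z) q₀(z,z'))} is the macroscopic acceptance probability and α_f(z,z') = min{1, (μ_λ(z') μ̄₀(z)) / (μ_λ(z) μ̄₀(z'))} is the microscopic acceptance probability. -/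
/-!
Substituting `ν_λ(x'|z') = μ_ext(z',x') / μ_λ(z')` and `ν_λ(x|z) = μ_ext(z,x) / μ_λ(z)`, the common
factor `μ_ext(z,x) μ_ext(z',x')` cancels and what remains is the balance of a two-stage
(delayed-acceptance) Metropolis–Hastings step: the first stage is reversible for `μ̄₀` with
proposal `q₀`, and the second stage corrects `μ̄₀` to `μ_λ`, being reversible for `μ_λ / μ̄₀`.
Both rest on the identity `a · min 1 (b / a) = min a b = b · min 1 (a / b)` for `a, b > 0`.
-/

open MeasureTheory Real

lemma mul_min_one_div {a : ℝ} (ha : 0 < a) (b : ℝ) : a * min 1 (b / a) = min a b := by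
  rw [mul_min_of_nonneg _ _ ha.le, mul_one, mul_div_cancel₀ b ha.ne']

lemma metropolis_balance {a b : ℝ} (ha : 0 < a) (hb : 0 < b) :
    a * min 1 (b / a) = b * min 1 (a / b) := by
  rw [mul_min_one_div ha, mul_min_one_div hb, min_comm]

lemma delayedAcceptance_balance {α : Type*} (q : α → α → ℝ) (p p₀ : α → ℝ)
    {a b : α} (hqab : 0 < q a b) (hqba : 0 < q b a) (hpa : 0 < p a) (hpb : 0 < p b)
    (hp₀a : 0 < p₀ a) (hp₀b : 0 < p₀ b) :
    q a b * min 1 (p₀ b * q b a / (p₀ a * q a b)) * min 1 (p b * p₀ a / (p a * p₀ b)) * p a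
      = q b a * min 1 (p₀ a * q a b / (p₀ b * q b a)) * min 1 (p a * p₀ b / (p b * p₀ a))
        * p b := by
  have first_stage := metropolis_balance (mul_pos hp₀a hqab) (mul_pos hp₀b hqba)
  have second_stage := metropolis_balance (div_pos hpa hp₀a) (div_pos hpb hp₀b)
  rw [div_div_div_eq, div_div_div_eq, mul_comm (p₀ b), mul_comm (p₀ a)] at second_stage
  have := hp₀a.ne'
  have := hp₀b.ne'
  calc _ = (p₀ a * q a b * min 1 (p₀ b * q b a / (p₀ a * q a b)))
        * (p a / p₀ a * min 1 (p b * p₀ a / (p a * p₀ b))) := by field_simp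
    _ = (p₀ b * q b a * min 1 (p₀ a * q a b / (p₀ b * q b a)))
        * (p b / p₀ b * min 1 (p a * p₀ b / (p b * p₀ a))) := by
      rw [first_stage, second_stage]
    _ = _ := by field_simp

theorem stmt_4_general
    (d m : ℕ)
    (μext : EuclideanSpace ℝ (Fin m) → EuclideanSpace ℝ (Fin d) → ℝ)
    (μlam : EuclideanSpace ℝ (Fin m) → ℝ)
    (ν : EuclideanSpace ℝ (Fin d) → EuclideanSpace ℝ (Fin m) → ℝ)
    (hν : ∀ x z, 0 < μlam z → ν x z = μext z x / μlam z)
    (q₀ : EuclideanSpace ℝ (Fin m) → EuclideanSpace ℝ (Fin m) → ℝ)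
    (hq₀ : ∀ z z', 0 < q₀ z z')
    (μbar₀ : EuclideanSpace ℝ (Fin m) → ℝ)
    (hμbar₀ : ∀ z, 0 < μbar₀ z)
    (αCG : EuclideanSpace ℝ (Fin m) → EuclideanSpace ℝ (Fin m) → ℝ)
    (hαCG : ∀ z z', αCG z z' = min 1 ((μbar₀ z' * q₀ z' z) / (μbar₀ z * q₀ z z')))
    (αf : EuclideanSpace ℝ (Fin m) → EuclideanSpace ℝ (Fin m) → ℝ)
    (hαf : ∀ z z', αf z z' = min 1 ((μlam z' * μbar₀ z) / (μlam z * μbar₀ z')))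
    (z z' : EuclideanSpace ℝ (Fin m)) (x x' : EuclideanSpace ℝ (Fin d))
    (hz : 0 < μlam z) (hz' : 0 < μlam z') :
    μext z x * q₀ z z' * αCG z z' * ν x' z' * αf z z'
      = μext z' x' * q₀ z' z * αCG z' z * ν x z * αf z' z := by
  have balance := delayedAcceptance_balance q₀ μlam μbar₀ (hq₀ z z') (hq₀ z' z) hz hz'
    (hμbar₀ z) (hμbar₀ z')
  rw [← hαCG, ← hαCG, ← hαf, ← hαf] at balance
  rw [hν x' z' hz', hν x z hz]
  field_simp
  linear_combination μext z x * μext z' x' * balance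

theorem stmt_4
    (d m : ℕ) (hd : 0 < d) (hm : 0 < m)
    (β lam : ℝ) (hβ : 0 < β) (hlam : 0 < lam)
    (V : EuclideanSpace ℝ (Fin d) → ℝ) (hV : Measurable V)
    (hVint : Integrable (fun x => Real.exp (-β * V x)))
    (ZV : ℝ) (hZV : ZV = ∫ x, Real.exp (-β * V x)) (hZVpos : 0 < ZV)
    (ξ : EuclideanSpace ℝ (Fin d) → EuclideanSpace ℝ (Fin m)) (hξ : Measurable ξ)
    (μ : EuclideanSpace ℝ (Fin d) → ℝ)
    (hμ : ∀ x, μ x = ZV⁻¹ * Real.exp (-β * V x))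
    (μext : EuclideanSpace ℝ (Fin m) → EuclideanSpace ℝ (Fin d) → ℝ)
    (hμext : ∀ z x, μext z x =
      (lam * β / (2 * Real.pi)) ^ ((m : ℝ) / 2) *
        Real.exp (-β * lam * ‖ξ x - z‖ ^ 2 / 2) * μ x)
    (μlam : EuclideanSpace ℝ (Fin m) → ℝ)
    (hμlam : ∀ z, μlam z = ∫ x, μext z x)
    (ν : EuclideanSpace ℝ (Fin d) → EuclideanSpace ℝ (Fin m) → ℝ)
    (hν : ∀ x z, 0 < μlam z → ν x z = μext z x / μlam z)
    (q₀ : EuclideanSpace ℝ (Fin m) → EuclideanSpace ℝ (Fin m) → ℝ)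
    (hq₀ : ∀ z z', 0 < q₀ z z')
    (μbar₀ : EuclideanSpace ℝ (Fin m) → ℝ)
    (hμbar₀ : ∀ z, 0 < μbar₀ z)
    (αCG : EuclideanSpace ℝ (Fin m) → EuclideanSpace ℝ (Fin m) → ℝ)
    (hαCG : ∀ z z', αCG z z' = min 1 ((μbar₀ z' * q₀ z' z) / (μbar₀ z * q₀ z z')))
    (αf : EuclideanSpace ℝ (Fin m) → EuclideanSpace ℝ (Fin m) → ℝ)
    (hαf : ∀ z z', αf z z' = min 1 ((μlam z' * μbar₀ z) / (μlam z * μbar₀ z')))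
    (z z' : EuclideanSpace ℝ (Fin m)) (x x' : EuclideanSpace ℝ (Fin d))
    (hz : 0 < μlam z) (hz' : 0 < μlam z')
    (hx : 0 < μext z x) (hx' : 0 < μext z' x') :
    μext z x * q₀ z z' * αCG z z' * ν x' z' * αf z z'
      = μext z' x' * q₀ z' z * αCG z' z * ν x z * αf z' z :=
  stmt_4_general d m μext μlam ν hν q₀ hq₀ μbar₀ hμbar₀ αCG hαCG αf hαf z z' x x' hz hz'
end

section
/- The mM-MCMC Markov transition leaves the extended distribution invariant: define the sub-transition density p((z,x),(z',x')) = q₀(z,z') α_CG(z,z') ν_λ(x'|z') α_f(z,z'), where α_CG(z,z') = min{1, (μ̄₀(z') q₀(z',z)) / (μ̄₀(z) q₀(z,z'))} and α_f(z,z') = min{1, (μ_λ(z') μ̄₀(z)) / (μ_λ(z) μ̄₀(z'))}, and the rejection probability r(z,x) = 1 − ∫∫ p((z,x),(z',x')) dz' dx'. Assume q₀(z,·) is a probability density on ℝ^m for every z, ν_λ(·|z') is a probability density on ℝ^d for every z', 0 < μ_λ(z) < ∞ for all z, and μ̄₀, q₀ are strictly positive and all occurring integrals are finite. Then for every bounded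 measurable f : ℝ^m × ℝ^d → ℝ, ∫∫ [ ∫∫ f(z',x') p((z,x),(z',x')) dz' dx' + f(z,x) r(z,x) ] μ_ext(z,x) dz dx = ∫∫ f(z,x) μ_ext(z,x) dz dx. -/
/-!
With `min 1 (b / a) = min a b / a`, the product of the two Metropolis–Hastings acceptance
probabilities with the forward weights `q₀(z,z') μ̄₀(z) μ_λ(z)` is symmetric in `(z, z')`; since
`μ_ext(z,x) = ν_λ(x|z) μ_λ(z)`, the sub-transition density `p` is in detailed balance with `μ_ext`.
Detailed balance and Fubini (swapping the two coordinates) make the flux of `f` out of each state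
equal to the flux into it, and the rejection term `f r` exactly compensates the outgoing flux.
-/

open MeasureTheory

lemma mul_min_one_div_s5 {x : ℝ} (y : ℝ) (hx : 0 < x) : x * min 1 (y / x) = min x y := by
  rw [mul_min_of_nonneg _ _ hx.le, mul_one, mul_div_cancel₀ _ hx.ne']

lemma two_stage_acceptance_detailed_balance {α : Type*} {q : α → α → ℝ} {ρ₀ ρ : α → ℝ}
    (hq : ∀ z z', 0 < q z z') (hρ₀ : ∀ z, 0 < ρ₀ z) (hρ : ∀ z, 0 < ρ z) (z z' : α) :
    q z z' * min 1 (ρ₀ z' * q z' z / (ρ₀ z * q z z')) * min 1 (ρ z' * ρ₀ z / (ρ z * ρ₀ z')) * ρ z =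
      q z' z * min 1 (ρ₀ z * q z z' / (ρ₀ z' * q z' z)) * min 1 (ρ z * ρ₀ z' / (ρ z' * ρ₀ z)) *
        ρ z' := by
  have key : ∀ z z', q z z' * min 1 (ρ₀ z' * q z' z / (ρ₀ z * q z z')) *
      min 1 (ρ z' * ρ₀ z / (ρ z * ρ₀ z')) * ρ z =
      min (ρ₀ z * q z z') (ρ₀ z' * q z' z) * min (ρ z * ρ₀ z') (ρ z' * ρ₀ z) / (ρ₀ z * ρ₀ z') := by
    intro z z'
    have hb := hρ₀ z
    have hb' := hρ₀ z'
    rw [← mul_min_one_div_s5 _ (mul_pos hb (hq z z')), ← mul_min_one_div_s5 _ (mul_pos (hρ z) hb')]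
    field_simp
  rw [key, key, min_comm (ρ₀ z' * q z' z), min_comm (ρ z' * ρ₀ z), mul_comm (ρ₀ z')]
  ring

section DetailedBalance

variable {α : Type*} [MeasurableSpace α] {μ : Measure α} [SFinite μ]
  {p : α → α → ℝ} {ρ f : α → ℝ}

lemma integral_integral_flux_comm (hbal : ∀ x y, p x y * ρ x = p y x * ρ y)
    (hflux : Integrable (fun q : α × α => f q.2 * p q.1 q.2 * ρ q.1) (μ.prod μ)) :
    Integrable (fun q : α × α => f q.1 * p q.1 q.2 * ρ q.1) (μ.prod μ) ∧
      ∫ x, ∫ y, f x * p x y * ρ x ∂μ ∂μ = ∫ x, ∫ y, f y * p x y * ρ x ∂μ ∂μ := by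
  have hswap : (fun q : α × α => f q.1 * p q.1 q.2 * ρ q.1) =
      (fun q : α × α => f q.2 * p q.1 q.2 * ρ q.1) ∘ Prod.swap := by
    ext ⟨x, y⟩
    simp only [Function.comp_apply, Prod.swap, mul_assoc, hbal]
  have hout : Integrable (fun q : α × α => f q.1 * p q.1 q.2 * ρ q.1) (μ.prod μ) := by
    rw [hswap]; exact hflux.swap
  refine ⟨hout, ?_⟩
  rw [integral_integral (f := fun x y => f x * p x y * ρ x) hout,
    integral_integral (f := fun x y => f y * p x y * ρ x) hflux]
  simp only [hswap]
  exact integral_prod_swap (fun q : α × α => f q.2 * p q.1 q.2 * ρ q.1)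

theorem integral_rejection_step_eq_of_detailed_balance
    (hbal : ∀ x y, p x y * ρ x = p y x * ρ y)
    (hflux : Integrable (fun q : α × α => f q.2 * p q.1 q.2 * ρ q.1) (μ.prod μ))
    (hfρ : Integrable (fun x => f x * ρ x) μ) :
    ∫ x, ((∫ y, f y * p x y ∂μ) + f x * (1 - ∫ y, p x y ∂μ)) * ρ x ∂μ = ∫ x, f x * ρ x ∂μ := by
  obtain ⟨hout, hout_eq⟩ := integral_integral_flux_comm hbal hflux
  have hpt : ∀ x, ((∫ y, f y * p x y ∂μ) + f x * (1 - ∫ y, p x y ∂μ)) * ρ x =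
      (∫ y, f y * p x y * ρ x ∂μ) + (f x * ρ x - ∫ y, f x * p x y * ρ x ∂μ) := by
    intro x
    simp only [integral_mul_const, integral_const_mul]
    ring
  have hin_int := hflux.integral_prod_left
  have hout_int := hout.integral_prod_left
  simp only at hin_int hout_int
  have hstay_int : Integrable (fun x => f x * ρ x - ∫ y, f x * p x y * ρ x ∂μ) μ :=
    hfρ.sub hout_int
  rw [integral_congr_ae (Filter.Eventually.of_forall hpt), integral_add hin_int hstay_int,
    integral_sub hfρ hout_int, hout_eq]
  ring

end DetailedBalance

theorem stmt_5_general
    (d m : ℕ)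
    (μext : EuclideanSpace ℝ (Fin m) → EuclideanSpace ℝ (Fin d) → ℝ)
    (μlam : EuclideanSpace ℝ (Fin m) → ℝ)
    (hμlam_pos : ∀ z, 0 < μlam z)
    (ν : EuclideanSpace ℝ (Fin d) → EuclideanSpace ℝ (Fin m) → ℝ)
    (hν : ∀ x z, ν x z = μext z x / μlam z)
    (q₀ : EuclideanSpace ℝ (Fin m) → EuclideanSpace ℝ (Fin m) → ℝ)
    (hq₀pos : ∀ z z', 0 < q₀ z z')
    (μbar₀ : EuclideanSpace ℝ (Fin m) → ℝ)
    (hμbar₀pos : ∀ z, 0 < μbar₀ z)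
    (αCG : EuclideanSpace ℝ (Fin m) → EuclideanSpace ℝ (Fin m) → ℝ)
    (hαCG : ∀ z z', αCG z z' = min 1 ((μbar₀ z' * q₀ z' z) / (μbar₀ z * q₀ z z')))
    (αf : EuclideanSpace ℝ (Fin m) → EuclideanSpace ℝ (Fin m) → ℝ)
    (hαf : ∀ z z', αf z z' = min 1 ((μlam z' * μbar₀ z) / (μlam z * μbar₀ z')))
    (ptrans : (EuclideanSpace ℝ (Fin m) × EuclideanSpace ℝ (Fin d)) →
      (EuclideanSpace ℝ (Fin m) × EuclideanSpace ℝ (Fin d)) → ℝ)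
    (hptrans : ∀ p p', ptrans p p' = q₀ p.1 p'.1 * αCG p.1 p'.1 * ν p'.2 p'.1 * αf p.1 p'.1)
    (r : EuclideanSpace ℝ (Fin m) → EuclideanSpace ℝ (Fin d) → ℝ)
    (hr : ∀ z x, r z x = 1 - ∫ p' : EuclideanSpace ℝ (Fin m) × EuclideanSpace ℝ (Fin d),
      ptrans (z, x) p')
    (f : EuclideanSpace ℝ (Fin m) → EuclideanSpace ℝ (Fin d) → ℝ)
    (hf : Measurable (fun p : EuclideanSpace ℝ (Fin m) × EuclideanSpace ℝ (Fin d) => f p.1 p.2))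
    (C : ℝ) (hfC : ∀ z x, |f z x| ≤ C)
    (hint2 : Integrable (fun q : (EuclideanSpace ℝ (Fin m) × EuclideanSpace ℝ (Fin d)) ×
        (EuclideanSpace ℝ (Fin m) × EuclideanSpace ℝ (Fin d)) =>
      f q.2.1 q.2.2 * ptrans q.1 q.2 * μext q.1.1 q.1.2))
    (hint3 : Integrable (fun p : EuclideanSpace ℝ (Fin m) × EuclideanSpace ℝ (Fin d) =>
      μext p.1 p.2)) :
    (∫ p : EuclideanSpace ℝ (Fin m) × EuclideanSpace ℝ (Fin d),
        ((∫ p' : EuclideanSpace ℝ (Fin m) × EuclideanSpace ℝ (Fin d),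
            f p'.1 p'.2 * ptrans p p') + f p.1 p.2 * r p.1 p.2) * μext p.1 p.2)
      = ∫ p : EuclideanSpace ℝ (Fin m) × EuclideanSpace ℝ (Fin d), f p.1 p.2 * μext p.1 p.2 := by
  have hμext_eq : ∀ z x, μext z x = ν x z * μlam z := fun z x => by
    rw [hν, div_mul_cancel₀ _ (hμlam_pos z).ne']
  have hbal : ∀ p p', ptrans p p' * μext p.1 p.2 = ptrans p' p * μext p'.1 p'.2 := by
    rintro ⟨z, x⟩ ⟨z', x'⟩
    simp only [hptrans, hαCG, hαf, hμext_eq]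
    linear_combination ν x z * ν x' z' *
      two_stage_acceptance_detailed_balance hq₀pos hμbar₀pos hμlam_pos z z'
  have hfμext : Integrable (fun p : EuclideanSpace ℝ (Fin m) × EuclideanSpace ℝ (Fin d) =>
      f p.1 p.2 * μext p.1 p.2) :=
    hint3.bdd_mul hf.aestronglyMeasurable (Filter.Eventually.of_forall fun p => hfC p.1 p.2)
  simp only [hr, Prod.mk.eta]
  exact integral_rejection_step_eq_of_detailed_balance hbal hint2 hfμext

theorem stmt_5
    (d m : ℕ) (hd : 0 < d) (hm : 0 < m)
    (β lam : ℝ) (hβ : 0 < β) (hlam : 0 < lam)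
    (V : EuclideanSpace ℝ (Fin d) → ℝ) (hV : Measurable V)
    (hVint : Integrable (fun x => Real.exp (-β * V x)))
    (ZV : ℝ) (hZV : ZV = ∫ x, Real.exp (-β * V x)) (hZVpos : 0 < ZV)
    (ξ : EuclideanSpace ℝ (Fin d) → EuclideanSpace ℝ (Fin m)) (hξ : Measurable ξ)
    (μ : EuclideanSpace ℝ (Fin d) → ℝ)
    (hμ : ∀ x, μ x = ZV⁻¹ * Real.exp (-β * V x))
    (μext : EuclideanSpace ℝ (Fin m) → EuclideanSpace ℝ (Fin d) → ℝ)
    (hμext : ∀ z x, μext z x =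
      (lam * β / (2 * Real.pi)) ^ ((m : ℝ) / 2) *
        Real.exp (-β * lam * ‖ξ x - z‖ ^ 2 / 2) * μ x)
    (μlam : EuclideanSpace ℝ (Fin m) → ℝ)
    (hμlam : ∀ z, μlam z = ∫ x, μext z x)
    (hμlam_pos : ∀ z, 0 < μlam z)
    (hμext_int : ∀ z, Integrable (fun x => μext z x))
    (ν : EuclideanSpace ℝ (Fin d) → EuclideanSpace ℝ (Fin m) → ℝ)
    (hν : ∀ x z, ν x z = μext z x / μlam z)
    (hνprob : ∀ z', (∫ x', ν x' z') = 1)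
    (q₀ : EuclideanSpace ℝ (Fin m) → EuclideanSpace ℝ (Fin m) → ℝ)
    (hq₀pos : ∀ z z', 0 < q₀ z z')
    (hq₀prob : ∀ z, (∫ z', q₀ z z') = 1)
    (μbar₀ : EuclideanSpace ℝ (Fin m) → ℝ)
    (hμbar₀pos : ∀ z, 0 < μbar₀ z)
    (αCG : EuclideanSpace ℝ (Fin m) → EuclideanSpace ℝ (Fin m) → ℝ)
    (hαCG : ∀ z z', αCG z z' = min 1 ((μbar₀ z' * q₀ z' z) / (μbar₀ z * q₀ z z')))
    (αf : EuclideanSpace ℝ (Fin m) → EuclideanSpace ℝ (Fin m) → ℝ)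
    (hαf : ∀ z z', αf z z' = min 1 ((μlam z' * μbar₀ z) / (μlam z * μbar₀ z')))
    (ptrans : (EuclideanSpace ℝ (Fin m) × EuclideanSpace ℝ (Fin d)) →
      (EuclideanSpace ℝ (Fin m) × EuclideanSpace ℝ (Fin d)) → ℝ)
    (hptrans : ∀ p p', ptrans p p' = q₀ p.1 p'.1 * αCG p.1 p'.1 * ν p'.2 p'.1 * αf p.1 p'.1)
    (r : EuclideanSpace ℝ (Fin m) → EuclideanSpace ℝ (Fin d) → ℝ)
    (hr : ∀ z x, r z x = 1 - ∫ p' : EuclideanSpace ℝ (Fin m) × EuclideanSpace ℝ (Fin d),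
      ptrans (z, x) p')
    (f : EuclideanSpace ℝ (Fin m) → EuclideanSpace ℝ (Fin d) → ℝ)
    (hf : Measurable (fun p : EuclideanSpace ℝ (Fin m) × EuclideanSpace ℝ (Fin d) => f p.1 p.2))
    (C : ℝ) (hfC : ∀ z x, |f z x| ≤ C)
    (hint1 : ∀ p : EuclideanSpace ℝ (Fin m) × EuclideanSpace ℝ (Fin d),
      Integrable (fun p' : EuclideanSpace ℝ (Fin m) × EuclideanSpace ℝ (Fin d) => ptrans p p'))
    (hint2 : Integrable (fun q : (EuclideanSpace ℝ (Fin m) × EuclideanSpace ℝ (Fin d)) ×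
        (EuclideanSpace ℝ (Fin m) × EuclideanSpace ℝ (Fin d)) =>
      f q.2.1 q.2.2 * ptrans q.1 q.2 * μext q.1.1 q.1.2))
    (hint3 : Integrable (fun p : EuclideanSpace ℝ (Fin m) × EuclideanSpace ℝ (Fin d) =>
      μext p.1 p.2)) :
    (∫ p : EuclideanSpace ℝ (Fin m) × EuclideanSpace ℝ (Fin d),
        ((∫ p' : EuclideanSpace ℝ (Fin m) × EuclideanSpace ℝ (Fin d),
            f p'.1 p'.2 * ptrans p p') + f p.1 p.2 * r p.1 p.2) * μext p.1 p.2)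
      = ∫ p : EuclideanSpace ℝ (Fin m) × EuclideanSpace ℝ (Fin d), f p.1 p.2 * μext p.1 p.2 :=
  stmt_5_general d m μext μlam hμlam_pos ν hν q₀ hq₀pos μbar₀ hμbar₀pos αCG hαCG αf hαf ptrans
    hptrans r hr f hf C hfC hint2 hint3
end

section
/- Derivative of the free energy of the filtered marginal (thermodynamic-integration identity for a one-dimensional reaction coordinate): let m = 1 and fix z₀ ∈ ℝ. Assume 0 < μ_λ(z) < ∞ for z in a neighborhood of z₀, and assume there exists an integrable function g : ℝ^d → [0,∞) with |ξ(x) − z| μ_ext(z,x) ≤ g(x) for all x and all z in that neighborhood. Then Q_λ(z) = −β^{-1} ln μ_λ(z) is differentiable at z₀ with Q_λ'(z₀) = λ ∫_{ℝ^d} (z₀ − ξ(x)) ν_λ(x|z₀) dx, i.e. the derivative of the free energy equals λ times the mean deviation of the reaction coordinate under the reconstruction distribution. -/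
/-! `μ_λ(z)` is the convolution of the law of `ξ` under the Gibbs measure with a Gaussian of
variance `(βλ)⁻¹`. The domination hypothesis is what licenses differentiation under the integral
sign, giving `μ_λ'(z₀) = -βλ ∫ (z₀ - ξ) μ_ext(z₀, ·)`; the chain rule for `-β⁻¹ log` then turns
this into `λ` times the mean of `z₀ - ξ` under `ν_λ(· | z₀)`. -/

open MeasureTheory Real Filter

theorem hasDerivAt_mul_exp_sq_mul (c a r w z : ℝ) :
    HasDerivAt (fun t => c * exp (a * (r - t) ^ 2 / 2) * w)
      (a * (z - r) * (c * exp (a * (r - z) ^ 2 / 2) * w)) z := by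
  have hexponent : HasDerivAt (fun t => a * (r - t) ^ 2 / 2) (a * (z - r)) z :=
    ((((hasDerivAt_id z).const_sub r).pow 2).const_mul a).div_const 2 |>.congr_deriv
      (by simp only [id, Nat.cast_ofNat]; ring)
  exact (hexponent.exp.const_mul c).mul_const w |>.congr_deriv (by ring)

theorem hasDerivAt_integral_mul_exp_sq_mul {α : Type*} [MeasurableSpace α] {ρ : Measure α}
    {ξ w g : α → ℝ} {c a z₀ : ℝ} {s : Set ℝ} (hs : s ∈ nhds z₀)
    (hξ : AEStronglyMeasurable ξ ρ)
    (hint : ∀ z ∈ s, Integrable (fun x => c * exp (a * (ξ x - z) ^ 2 / 2) * w x) ρ)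
    (hg : Integrable g ρ)
    (hdom : ∀ z ∈ s, ∀ x, |ξ x - z| * |c * exp (a * (ξ x - z) ^ 2 / 2) * w x| ≤ g x) :
    HasDerivAt (fun z => ∫ x, c * exp (a * (ξ x - z) ^ 2 / 2) * w x ∂ρ)
      (∫ x, a * (z₀ - ξ x) * (c * exp (a * (ξ x - z₀) ^ 2 / 2) * w x) ∂ρ) z₀ := by
  have hF₀ := hint z₀ (mem_of_mem_nhds hs)
  have hbound : ∀ z ∈ s, ∀ x,
      ‖a * (z - ξ x) * (c * exp (a * (ξ x - z) ^ 2 / 2) * w x)‖ ≤ |a| * g x := by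
    intro z hz x
    rw [norm_mul, norm_mul, mul_assoc, Real.norm_eq_abs, Real.norm_eq_abs, Real.norm_eq_abs,
      abs_sub_comm]
    exact mul_le_mul_of_nonneg_left (hdom z hz x) (abs_nonneg a)
  refine (hasDerivAt_integral_of_dominated_loc_of_deriv_le hs
    (eventually_of_mem hs fun z hz => (hint z hz).aestronglyMeasurable) hF₀
    ((aestronglyMeasurable_const.mul (aestronglyMeasurable_const.sub hξ)).mul
      hF₀.aestronglyMeasurable)
    (.of_forall fun x z hz => hbound z hz x) (hg.const_mul |a|)
    (.of_forall fun x z _ => hasDerivAt_mul_exp_sq_mul c a (ξ x) (w x) z)).2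

theorem stmt_15_general
    (d : ℕ)
    (β lam : ℝ) (hβ : 0 < β)
    (V : EuclideanSpace ℝ (Fin d) → ℝ)
    (ZV : ℝ) (hZVpos : 0 < ZV)
    (ξ : EuclideanSpace ℝ (Fin d) → ℝ) (hξ : Measurable ξ)
    (μ : EuclideanSpace ℝ (Fin d) → ℝ)
    (hμ : ∀ x, μ x = ZV⁻¹ * Real.exp (-β * V x))
    (μext : ℝ → EuclideanSpace ℝ (Fin d) → ℝ)
    (hμext : ∀ z x, μext z x =
      (lam * β / (2 * Real.pi)) ^ ((1 : ℝ) / 2) *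
        Real.exp (-β * lam * (ξ x - z) ^ 2 / 2) * μ x)
    (μlam : ℝ → ℝ) (hμlam : ∀ z, μlam z = ∫ x, μext z x)
    (ν : EuclideanSpace ℝ (Fin d) → ℝ → ℝ)
    (hν : ∀ x z, 0 < μlam z → ν x z = μext z x / μlam z)
    (Qlam : ℝ → ℝ) (hQlam : ∀ z, Qlam z = -β⁻¹ * Real.log (μlam z))
    (z₀ : ℝ) (s : Set ℝ) (hs : s ∈ nhds z₀)
    (hpos : ∀ z ∈ s, 0 < μlam z)
    (hintg : ∀ z ∈ s, Integrable (fun x => μext z x))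
    (g : EuclideanSpace ℝ (Fin d) → ℝ) (hg : Integrable g)
    (hdom : ∀ z ∈ s, ∀ x, |ξ x - z| * μext z x ≤ g x) :
    HasDerivAt Qlam (lam * ∫ x, (z₀ - ξ x) * ν x z₀) z₀ := by
  have hz₀ : z₀ ∈ s := mem_of_mem_nhds hs
  -- `x ^ (1 / 2) = √x` holds for every real `x`, negative ones included.
  have hμext_nonneg : ∀ z x, 0 ≤ μext z x := fun z x => by
    rw [hμext, ← sqrt_eq_rpow, hμ]; positivity
  obtain rfl : Qlam = fun z => -β⁻¹ * log (μlam z) := funext hQlam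
  obtain rfl : μlam = fun z => ∫ x, μext z x := funext hμlam
  obtain rfl : μext = fun z x =>
      √(lam * β / (2 * π)) * exp (-β * lam * (ξ x - z) ^ 2 / 2) * μ x := by
    ext z x; rw [hμext, sqrt_eq_rpow]
  have hμlam_deriv := hasDerivAt_integral_mul_exp_sq_mul hs hξ.aestronglyMeasurable hintg hg
    fun z hz x => by rw [abs_of_nonneg (hμext_nonneg z x)]; exact hdom z hz x
  refine ((hμlam_deriv.log (hpos z₀ hz₀).ne').const_mul (-β⁻¹)).congr_deriv ?_
  simp_rw [hν _ _ (hpos z₀ hz₀), ← mul_div_assoc, integral_div, mul_assoc (-β * lam),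
    integral_const_mul]
  have hβ_cancel : ∀ I M : ℝ, -β⁻¹ * (-β * lam * I) / M = lam * (I / M) := by
    intro I M; field_simp [hβ.ne']
  exact hβ_cancel _ _

theorem stmt_15
    (d : ℕ) (hd : 0 < d)
    (β lam : ℝ) (hβ : 0 < β) (hlam : 0 < lam)
    (V : EuclideanSpace ℝ (Fin d) → ℝ) (hV : Measurable V)
    (hVint : Integrable (fun x => Real.exp (-β * V x)))
    (ZV : ℝ) (hZV : ZV = ∫ x, Real.exp (-β * V x)) (hZVpos : 0 < ZV)
    (ξ : EuclideanSpace ℝ (Fin d) → ℝ) (hξ : Measurable ξ)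
    (μ : EuclideanSpace ℝ (Fin d) → ℝ)
    (hμ : ∀ x, μ x = ZV⁻¹ * Real.exp (-β * V x))
    (μext : ℝ → EuclideanSpace ℝ (Fin d) → ℝ)
    (hμext : ∀ z x, μext z x =
      (lam * β / (2 * Real.pi)) ^ ((1 : ℝ) / 2) *
        Real.exp (-β * lam * (ξ x - z) ^ 2 / 2) * μ x)
    (μlam : ℝ → ℝ) (hμlam : ∀ z, μlam z = ∫ x, μext z x)
    (ν : EuclideanSpace ℝ (Fin d) → ℝ → ℝ)
    (hν : ∀ x z, 0 < μlam z → ν x z = μext z x / μlam z)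
    (Qlam : ℝ → ℝ) (hQlam : ∀ z, Qlam z = -β⁻¹ * Real.log (μlam z))
    (z₀ : ℝ) (s : Set ℝ) (hs : s ∈ nhds z₀)
    (hpos : ∀ z ∈ s, 0 < μlam z)
    (hintg : ∀ z ∈ s, Integrable (fun x => μext z x))
    (g : EuclideanSpace ℝ (Fin d) → ℝ) (hg : Integrable g)
    (hdom : ∀ z ∈ s, ∀ x, |ξ x - z| * μext z x ≤ g x) :
    HasDerivAt Qlam (lam * ∫ x, (z₀ - ξ x) * ν x z₀) z₀ :=
  stmt_15_general d β lam hβ V ZV hZVpos ξ hξ μ hμ μext hμext μlam hμlam ν hν Qlam hQlam z₀ s hs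
    hpos hintg g hg hdom
end
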